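/- arXiv:2503.06110 — 2 statements merged into one kernel-verified Lean document; each statement's English description precedes it below -/
import Mathlib

section
/- If x ∈ K^n and v = (f_1/g, ..., f_n/g) ∈ F_q(X)^n ∩ Z_O^n satisfies d(x, v) ≤ ψ(H(v)), and t satisfies e^{nt} = Ψ(H(v)) where Ψ(s) = ψ(s)^{-n/(n+1)}, then ||g_t u_x v|| ≤ e^{-nt} Ψ^{-1}(e^{nt}) and |⟨e_1, g_t u_x v⟩| = ||g_t u_x v||, where v = (g, f_1, ..., f_n) is the integer vector associated to v. -/
open scoped Classical ENNReal
noncomputable section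

/-- The absolute value on `K = 𝔽_q((X⁻¹))`, modelled as Laurent series in `T = X⁻¹`:
`|x| = e^{-(order of x)}`, so that `|X| = e`. -/
def kabs {Fq : Type} [Field Fq] (x : LaurentSeries Fq) : ℝ :=
  if x = 0 then 0 else Real.exp (-(x.order : ℝ))

lemma kabs_nonneg {Fq : Type} [Field Fq] (x : LaurentSeries Fq) : 0 ≤ kabs x := by
  unfold kabs; split <;> positivity

lemma kabs_eq_zero {Fq : Type} [Field Fq] {x : LaurentSeries Fq} :
    kabs x = 0 ↔ x = 0 := by
  unfold kabs; split
  · simp_all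
  · simp_all [Real.exp_ne_zero]

lemma kabs_neg {Fq : Type} [Field Fq] (x : LaurentSeries Fq) : kabs (-x) = kabs x := by
  unfold kabs
  simp [HahnSeries.order_neg, neg_eq_zero]

lemma kabs_add_le {Fq : Type} [Field Fq] (x y : LaurentSeries Fq) :
    kabs (x + y) ≤ max (kabs x) (kabs y) := by
  by_cases hx : x = 0
  · simp [hx, le_max_iff, le_refl]
  by_cases hy : y = 0
  · simp [hy, le_max_iff, le_refl]
  by_cases hxy : x + y = 0
  · simp only [hxy, kabs, if_pos rfl, le_max_iff]
    left; exact kabs_nonneg x |>.trans (by simp [kabs, hx, le_refl])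
  · have h := HahnSeries.min_order_le_order_add hxy
    simp only [kabs, if_neg hx, if_neg hy, if_neg hxy, le_max_iff]
    rcases le_total x.order y.order with h' | h'
    · left
      apply Real.exp_le_exp.2
      have : x.order ≤ (x + y).order := le_trans (by simp [min_eq_left h']) h
      have h2 : (x.order : ℝ) ≤ ((x + y).order : ℝ) := by exact_mod_cast this
      linarith
    · right
      apply Real.exp_le_exp.2
      have : y.order ≤ (x + y).order := le_trans (by simp [min_eq_right h']) h
      have h2 : (y.order : ℝ) ≤ ((x + y).order : ℝ) := by exact_mod_cast this
      linarith

instance (priority := 10000) kMetric (Fq : Type) [Field Fq] :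
    MetricSpace (LaurentSeries Fq) where
  dist x y := kabs (x - y)
  dist_self x := by simp [kabs]
  dist_comm x y := by
    show kabs (x - y) = kabs (y - x)
    have h : x - y = -(y - x) := by ring
    rw [h, kabs_neg]
  dist_triangle x y z := by
    have h := kabs_add_le (x - y) (y - z)
    rw [sub_add_sub_cancel] at h
    exact h.trans (max_le (le_add_of_nonneg_right (kabs_nonneg _))
      (le_add_of_nonneg_left (kabs_nonneg _)))
  eq_of_dist_eq_zero h := sub_eq_zero.mp (kabs_eq_zero.mp h)

/-- The embedding of `𝔽_q[X]` into `K`, sending `X` to `T⁻¹`. -/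
def polyK (Fq : Type) [Field Fq] : Polynomial Fq →+* LaurentSeries Fq :=
  (Polynomial.aeval (HahnSeries.single (-1 : ℤ) (1 : Fq))).toRingHom

/-- The element `X` of `K`. -/
def Xe (Fq : Type) [Field Fq] : LaurentSeries Fq := HahnSeries.single (-1 : ℤ) 1

/-- Sup norm on `K^m`. -/
def supNorm {Fq : Type} [Field Fq] {m : ℕ} (v : Fin m → LaurentSeries Fq) : ℝ :=
  ⨆ i, kabs (v i)

/-- The diagonal flow `g_t = diag(X^{-nt}, X^t, …, X^t)`. -/
def gMat (Fq : Type) [Field Fq] (n : ℕ) (t : ℤ) :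
    Matrix (Fin (n+1)) (Fin (n+1)) (LaurentSeries Fq) :=
  Matrix.diagonal (fun i => if i = 0 then Xe Fq ^ (-(n : ℤ) * t) else Xe Fq ^ t)

/-- The unipotent matrix `u_x` with first column `(1, -x_1, …, -x_n)ᵀ`. -/
def uMat {Fq : Type} [Field Fq] {n : ℕ} (x : Fin n → LaurentSeries Fq) :
    Matrix (Fin (n+1)) (Fin (n+1)) (LaurentSeries Fq) :=
  Matrix.of fun i j =>
    if i = j then 1 else if hi : i = 0 then 0 else if j = 0 then -x (i.pred hi) else 0

/-- The integer vector `(g, f_1, …, f_n)` associated to a rational point. -/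
def assocVec {Fq : Type} [Field Fq] {n : ℕ} (f : Fin n → Polynomial Fq)
    (g : Polynomial Fq) : Fin (n+1) → LaurentSeries Fq :=
  Fin.cons (polyK Fq g) fun i => polyK Fq (f i)

/-- The height `H(v) = max(|g|, |f_1|, …, |f_n|)`. -/
def height {Fq : Type} [Field Fq] {n : ℕ} (f : Fin n → Polynomial Fq)
    (g : Polynomial Fq) : ℝ :=
  supNorm (assocVec f g)

/-- The rational point `(f_1/g, …, f_n/g) ∈ K^n`. -/
def ratPt {Fq : Type} [Field Fq] {n : ℕ} (f : Fin n → Polynomial Fq)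
    (g : Polynomial Fq) : Fin n → LaurentSeries Fq :=
  fun i => polyK Fq (f i) / polyK Fq g

/-- Points of the lattice `A · 𝔽_q[X]^m` in `K^m`. -/
def latticePts {Fq : Type} [Field Fq] {m : ℕ}
    (A : Matrix (Fin m) (Fin m) (LaurentSeries Fq)) :
    Set (Fin m → LaurentSeries Fq) :=
  {w | ∃ p : Fin m → Polynomial Fq, w = A.mulVec fun i => polyK Fq (p i)}

/-- First minimum of the lattice `A · 𝔽_q[X]^m`. -/
def lambda1 {Fq : Type} [Field Fq] {m : ℕ}
    (A : Matrix (Fin m) (Fin m) (LaurentSeries Fq)) : ℝ :=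
  sInf {r | ∃ w ∈ latticePts A, w ≠ 0 ∧ r = supNorm w}

/-- `i`-th successive minimum of the lattice `A · 𝔽_q[X]^m`. -/
def succMin {Fq : Type} [Field Fq] {m : ℕ}
    (A : Matrix (Fin m) (Fin m) (LaurentSeries Fq)) (i : ℕ) : ℝ :=
  sInf {r | ∃ v : Fin i → (Fin m → LaurentSeries Fq),
    (∀ j, v j ∈ latticePts A) ∧ LinearIndependent (LaurentSeries Fq) v ∧
    ∀ j, supNorm (v j) ≤ r}

/-- `x` is `ψ`-approximable. -/
def IsPsiApprox {Fq : Type} [Field Fq] {n : ℕ} (ψ : ℝ → ℝ)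
    (x : Fin n → LaurentSeries Fq) : Prop :=
  {fg : (Fin n → Polynomial Fq) × Polynomial Fq | fg.2 ≠ 0 ∧
    supNorm (fun i => x i - polyK Fq (fg.1 i) / polyK Fq fg.2) <
      ψ (kabs (polyK Fq fg.2))}.Infinite

/-- The set `Exact(ψ)` in the ultrametric formulation. -/
def ExactSet (Fq : Type) [Field Fq] (n : ℕ) (ψ : ℝ → ℝ) :
    Set (Fin n → LaurentSeries Fq) :=
  {x | (∀ i, kabs (x i) ≤ 1) ∧
    {fg : (Fin n → Polynomial Fq) × Polynomial Fq | fg.2 ≠ 0 ∧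
      supNorm (fun i => x i - polyK Fq (fg.1 i) / polyK Fq fg.2) =
        ψ (kabs (polyK Fq fg.2))}.Infinite ∧
    ∃ G : ℝ, ∀ (f : Fin n → Polynomial Fq) (g : Polynomial Fq), g ≠ 0 →
      G ≤ kabs (polyK Fq g) →
      ψ (kabs (polyK Fq g)) ≤ supNorm fun i => x i - polyK Fq (f i) / polyK Fq g}

/-- The lower order of infinity `λ_ψ` of `ψ`. -/
def lambdaPsi (ψ : ℝ → ℝ) : ℝ≥0∞ :=
  Filter.liminf (fun s => ENNReal.ofReal (-Real.log (ψ s) / Real.log s)) Filter.atTop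


/-! The first coordinate of `u_x v` is `g` and the others are `f_i - x_i g = -(x_i - f_i/g) g`, of
size at most `ψ(H) H` where `H = |g| = H(v)` (as `v ∈ Z_O^n`). The flow multiplies these by
`e^{-nt}` and `e^t` respectively, and the choice of `t` says exactly `e^{(n+1)t} ψ(H) = 1`. So every
coordinate of `g_t u_x v` is bounded by `e^{-nt} H = e^{-nt} Ψ⁻¹(e^{nt})`, the size of the first one. -/
section Absolute

variable {Fq : Type} [Field Fq]

lemma kabs_pos {x : LaurentSeries Fq} (hx : x ≠ 0) : 0 < kabs x := by
  rw [kabs, if_neg hx]; positivity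

lemma kabs_mul (x y : LaurentSeries Fq) : kabs (x * y) = kabs x * kabs y := by
  by_cases hx : x = 0; · simp [hx, kabs]
  by_cases hy : y = 0; · simp [hy, kabs]
  rw [kabs, kabs, kabs, if_neg hx, if_neg hy, if_neg (mul_ne_zero hx hy),
    HahnSeries.order_mul hx hy, ← Real.exp_add]
  push_cast; ring_nf

def kabsHom : LaurentSeries Fq →*₀ ℝ where
  toFun := kabs
  map_zero' := by simp [kabs]
  map_one' := by simp [kabs]
  map_mul' := kabs_mul

lemma kabs_div (x y : LaurentSeries Fq) : kabs (x / y) = kabs x / kabs y :=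
  map_div₀ kabsHom x y

lemma kabs_Xe_zpow (m : ℤ) : kabs (Xe Fq ^ m) = Real.exp m := by
  have hXe : kabs (Xe Fq) = Real.exp 1 := by
    simp [kabs, Xe, HahnSeries.order_single]
  rw [show kabs (Xe Fq ^ m) = kabs (Xe Fq) ^ m from map_zpow₀ kabsHom (Xe Fq) m, hXe,
    ← Real.rpow_intCast, Real.exp_one_rpow]

end Absolute

section Polynomial

variable {Fq : Type} [Field Fq]

lemma polyK_coeff_neg_natDegree (p : Polynomial Fq) :
    (polyK Fq p).coeff (-(p.natDegree : ℤ)) = p.leadingCoeff := by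
  rw [polyK, AlgHom.toRingHom_eq_coe, RingHom.coe_coe, Polynomial.aeval_eq_sum_range,
    HahnSeries.coeff_sum, Finset.sum_eq_single p.natDegree]
  · simp [HahnSeries.single_pow, Algebra.smul_def, HahnSeries.algebraMap_apply']
  · intro k _ hk
    simp [HahnSeries.single_pow, Algebra.smul_def, HahnSeries.algebraMap_apply', Ne.symm hk]
  · simp

lemma polyK_ne_zero {p : Polynomial Fq} (hp : p ≠ 0) : polyK Fq p ≠ 0 := fun h =>
  Polynomial.leadingCoeff_ne_zero.mpr hp (by simpa [h] using (polyK_coeff_neg_natDegree p).symm)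

end Polynomial

section SupNorm

variable {Fq : Type} [Field Fq] {m : ℕ}

lemma le_supNorm (v : Fin m → LaurentSeries Fq) (i : Fin m) : kabs (v i) ≤ supNorm v :=
  le_ciSup (Set.finite_range fun j => kabs (v j)).bddAbove i

lemma supNorm_eq_kabs_zero {v : Fin (m + 1) → LaurentSeries Fq}
    (h : ∀ k : Fin m, kabs (v k.succ) ≤ kabs (v 0)) : supNorm v = kabs (v 0) :=
  le_antisymm (ciSup_le (Fin.cases le_rfl h)) (le_supNorm v 0)

lemma height_eq_kabs_polyK {f : Fin m → Polynomial Fq} {g : Polynomial Fq} (hg : g ≠ 0)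
    (hZO : ∀ i, kabs (ratPt f g i) ≤ 1) : height f g = kabs (polyK Fq g) :=
  supNorm_eq_kabs_zero fun k => by
    simpa [assocVec, ratPt, kabs_div, div_le_one (kabs_pos (polyK_ne_zero hg))] using hZO k

end SupNorm

section Flow

variable {Fq : Type} [Field Fq] {n : ℕ} (x : Fin n → LaurentSeries Fq)
  (v : Fin (n + 1) → LaurentSeries Fq) (t : ℤ)

lemma uMat_mulVec_zero : (uMat x).mulVec v 0 = v 0 := by
  simp [Matrix.mulVec, dotProduct, uMat, eq_comm]

lemma uMat_mulVec_succ (k : Fin n) : (uMat x).mulVec v k.succ = v k.succ - x k * v 0 := by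
  simp only [Matrix.mulVec, dotProduct, uMat, Matrix.of_apply]
  rw [Fin.sum_univ_succ]
  simp only [Fin.succ_ne_zero, ↓reduceIte, ↓reduceDIte, Fin.pred_succ, neg_mul, Fin.succ_inj,
    ite_mul, one_mul, zero_mul, Finset.sum_ite_eq, Finset.mem_univ, eq_comm]
  ring

lemma gMat_mul_uMat_mulVec_zero :
    (gMat Fq n t * uMat x).mulVec v 0 = Xe Fq ^ (-(n : ℤ) * t) * v 0 := by
  rw [← Matrix.mulVec_mulVec, gMat, Matrix.mulVec_diagonal, if_pos rfl, uMat_mulVec_zero]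

lemma gMat_mul_uMat_mulVec_succ (k : Fin n) :
    (gMat Fq n t * uMat x).mulVec v k.succ = Xe Fq ^ t * (v k.succ - x k * v 0) := by
  rw [← Matrix.mulVec_mulVec, gMat, Matrix.mulVec_diagonal, if_neg k.succ_ne_zero,
    uMat_mulVec_succ]

variable {x t} {f : Fin n → Polynomial Fq} {g : Polynomial Fq}

lemma kabs_flow_assocVec_zero :
    kabs ((gMat Fq n t * uMat x).mulVec (assocVec f g) 0) =
      Real.exp (-(n : ℝ) * t) * kabs (polyK Fq g) := by
  rw [gMat_mul_uMat_mulVec_zero, kabs_mul, kabs_Xe_zpow]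
  push_cast; rfl

lemma kabs_flow_assocVec_succ (hg : g ≠ 0) (k : Fin n) :
    kabs ((gMat Fq n t * uMat x).mulVec (assocVec f g) k.succ) =
      Real.exp t * kabs (x k - ratPt f g k) * kabs (polyK Fq g) := by
  have hcomp : assocVec f g k.succ - x k * assocVec f g 0 =
      -((x k - ratPt f g k) * polyK Fq g) := by
    simp only [assocVec, ratPt, Fin.cons_succ, Fin.cons_zero]
    field_simp [polyK_ne_zero hg]
    ring
  rw [gMat_mul_uMat_mulVec_succ, hcomp, kabs_mul, kabs_neg, kabs_mul, kabs_Xe_zpow, mul_assoc]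

end Flow

lemma exp_mul_eq_exp_neg_nat_mul {n : ℕ} (hn : 0 < n) {a s : ℝ} (ha : 0 < a)
    (h : Real.exp (n * s) = a ^ (-(n : ℝ) / (n + 1))) :
    Real.exp s * a = Real.exp (-(n : ℝ) * s) := by
  have hlog : Real.log a = -((n + 1) * s) := by
    have := congrArg Real.log h
    rw [Real.log_exp, Real.log_rpow ha] at this
    have hn' : (n : ℝ) ≠ 0 := by positivity
    field_simp at this
    linarith
  rw [← Real.exp_log ha, hlog, ← Real.exp_add]
  ring_nf

theorem dani_a_general (Fq : Type) [Field Fq] (n : ℕ)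
    (ψ Φ : ℝ → ℝ) (hψpos : ∀ s > 0, 0 < ψ s)
    (hΦ1 : ∀ s > 0, Φ (ψ s ^ (-(n : ℝ) / (n + 1))) = s)
    (x : Fin n → LaurentSeries Fq)
    (f : Fin n → Polynomial Fq) (g : Polynomial Fq) (hg : g ≠ 0)
    (hZO : ∀ i, kabs (ratPt f g i) ≤ 1)
    (hd : supNorm (fun i => x i - ratPt f g i) ≤ ψ (height f g))
    (t : ℤ) (ht : Real.exp (n * t) = ψ (height f g) ^ (-(n : ℝ) / (n + 1))) :
    supNorm ((gMat Fq n t * uMat x).mulVec (assocVec f g)) ≤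
      Real.exp (-(n : ℝ) * t) * Φ (Real.exp (n * t)) ∧
    kabs ((gMat Fq n t * uMat x).mulVec (assocVec f g) 0) =
      supNorm ((gMat Fq n t * uMat x).mulVec (assocVec f g)) := by
  have hH : 0 < kabs (polyK Fq g) := kabs_pos (polyK_ne_zero hg)
  rw [height_eq_kabs_polyK hg hZO] at hd ht
  set w := (gMat Fq n t * uMat x).mulVec (assocVec f g)
  have hsup : supNorm w = kabs (w 0) := by
    refine supNorm_eq_kabs_zero fun k => ?_
    calc _ = Real.exp t * kabs (x k - ratPt f g k) * kabs (polyK Fq g) :=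
          kabs_flow_assocVec_succ hg k
      _ ≤ Real.exp t * ψ (kabs (polyK Fq g)) * kabs (polyK Fq g) := by
          gcongr
          exact (le_supNorm (fun i => x i - ratPt f g i) k).trans hd
      _ = _ := by
          rw [exp_mul_eq_exp_neg_nat_mul k.pos (hψpos _ hH) ht, kabs_flow_assocVec_zero]
  refine ⟨?_, hsup.symm⟩
  rw [hsup, kabs_flow_assocVec_zero, ht, hΦ1 _ hH]

/-- Dani correspondence, part (a). -/
theorem dani_a (Fq : Type) [Field Fq] [Fintype Fq] (n : ℕ) (hn : 0 < n)
    (ψ Φ : ℝ → ℝ) (hψpos : ∀ s > 0, 0 < ψ s)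
    (hψdec : StrictAntiOn ψ (Set.Ioi 0))
    (hΦ1 : ∀ s > 0, Φ (ψ s ^ (-(n : ℝ) / (n + 1))) = s)
    (hΦ2 : ∀ y > 0, ψ (Φ y) ^ (-(n : ℝ) / (n + 1)) = y)
    (x : Fin n → LaurentSeries Fq)
    (f : Fin n → Polynomial Fq) (g : Polynomial Fq) (hg : g ≠ 0)
    (hZO : ∀ i, kabs (ratPt f g i) ≤ 1)
    (hd : supNorm (fun i => x i - ratPt f g i) ≤ ψ (height f g))
    (t : ℤ) (ht : Real.exp (n * t) = ψ (height f g) ^ (-(n : ℝ) / (n + 1))) :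
    supNorm ((gMat Fq n t * uMat x).mulVec (assocVec f g)) ≤
      Real.exp (-(n : ℝ) * t) * Φ (Real.exp (n * t)) ∧
    kabs ((gMat Fq n t * uMat x).mulVec (assocVec f g) 0) =
      supNorm ((gMat Fq n t * uMat x).mulVec (assocVec f g)) :=
  dani_a_general Fq n ψ Φ hψpos hΦ1 x f g hg hZO hd t ht
end
end

section
/- Minkowski's first theorem over function fields: every unimodular F_q[X]-lattice Λ in F_q((X^{-1}))^{n+1} (i.e., a lattice of covolume 1, of the form gF_q[X]^{n+1} with det g of absolute value 1) contains a nonzero vector v with ||v|| ≤ 1. -/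
open scoped Classical ENNReal
noncomputable section

/-! Write `ord x = -log |x|` for the `X⁻¹`-adic order (`HahnSeries.orderTop`). Among all bases
`A U` of the lattice, `U ∈ GL_{n+1}(𝔽_q[X])`, choose one maximising the sum of the orders of its
columns; expanding the determinant shows that this sum is at most `ord det A = 0`. If the matrix of
leading coefficients of the columns were singular, a kernel vector would give a unimodular column
operation raising the order of one column and fixing the others, contradicting maximality. So that
matrix is invertible; its determinant is the coefficient of `det (A U)` at the sum of the column
orders, hence that sum is exactly `ord det A = 0`. Some column then has order `≥ 0`, i.e. norm `≤ 1`. -/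

namespace HahnSeries

variable {Γ R : Type*} [LinearOrder Γ]

theorem le_orderTop_sum [AddCommMonoid R] {ι : Type*} {s : Finset ι} {f : ι → R⟦Γ⟧}
    {g : WithTop Γ} (h : ∀ i ∈ s, g ≤ (f i).orderTop) : g ≤ (∑ i ∈ s, f i).orderTop :=
  Finset.sum_induction f (fun x => g ≤ x.orderTop)
    (fun _ _ hx hy => (le_min hx hy).trans min_orderTop_le_orderTop_add) (by simp) h

variable [AddCommMonoid Γ] [IsOrderedCancelAddMonoid Γ]

theorem coeff_mul_add_of_le_orderTop [NonUnitalNonAssocSemiring R] {x y : R⟦Γ⟧} {a b : Γ}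
    (hx : a ≤ x.orderTop) (hy : b ≤ y.orderTop) :
    (x * y).coeff (a + b) = x.coeff a * y.coeff b := by
  rw [coeff_mul]
  refine Finset.sum_eq_single (a, b) (fun ij hij hne => ?_) (fun hab => ?_)
  · obtain ⟨hi, hj, hsum⟩ := Finset.mem_antidiagonal.mp hij
    have hai : a ≤ ij.1 := WithTop.coe_le_coe.mp (hx.trans (orderTop_le_of_coeff_ne_zero hi))
    have hbj : b ≤ ij.2 := WithTop.coe_le_coe.mp (hy.trans (orderTop_le_of_coeff_ne_zero hj))
    obtain ⟨rfl, rfl⟩ := (add_eq_add_iff_eq_and_eq hai hbj).mp hsum.symm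
    exact absurd rfl hne
  · simp only [Finset.mem_antidiagonal, mem_support, ne_eq, and_true, not_and_or, not_not] at hab
    rcases hab with h | h <;> simp [h]

theorem sum_orderTop_le_orderTop_prod [CommSemiring R] {ι : Type*} (s : Finset ι)
    (f : ι → R⟦Γ⟧) : ∑ i ∈ s, (f i).orderTop ≤ (∏ i ∈ s, f i).orderTop := by
  induction s using Finset.cons_induction with
  | empty => simpa [← single_zero_one] using orderTop_single_le (a := (0 : Γ)) (r := (1 : R))
  | cons j s hj ih =>
    rw [Finset.prod_cons, Finset.sum_cons]
    exact (add_le_add le_rfl ih).trans orderTop_add_le_mul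

theorem coeff_prod_of_le_orderTop [CommSemiring R] {ι : Type*} (s : Finset ι)
    (f : ι → R⟦Γ⟧) (a : ι → Γ) (h : ∀ i ∈ s, a i ≤ (f i).orderTop) :
    (∏ i ∈ s, f i).coeff (∑ i ∈ s, a i) = ∏ i ∈ s, (f i).coeff (a i) := by
  induction s using Finset.cons_induction with
  | empty => simp
  | cons j s hj ih =>
    have hs : ((∑ i ∈ s, a i : Γ) : WithTop Γ) ≤ (∏ i ∈ s, f i).orderTop := by
      rw [WithTop.coe_sum]
      exact (Finset.sum_le_sum fun i hi => h i (Finset.mem_cons_of_mem hi)).trans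
        (sum_orderTop_le_orderTop_prod s f)
    rw [Finset.prod_cons, Finset.sum_cons, Finset.prod_cons,
      coeff_mul_add_of_le_orderTop (h j (Finset.mem_cons_self j s)) hs,
      ih fun i hi => h i (Finset.mem_cons_of_mem hi)]

end HahnSeries

namespace Matrix

open HahnSeries

variable {Γ R ι m : Type*} [LinearOrder Γ] [Fintype ι]

def colOrderTop [Zero R] (B : Matrix ι m R⟦Γ⟧) (j : m) : WithTop Γ :=
  Finset.univ.inf fun i => (B i j).orderTop

theorem colOrderTop_le [Zero R] (B : Matrix ι m R⟦Γ⟧) (i : ι) (j : m) :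
    B.colOrderTop j ≤ (B i j).orderTop :=
  Finset.inf_le (Finset.mem_univ i)

/-- With `a j` the order of column `j`, this is the matrix of leading coefficients of the
columns. -/
def colCoeff [Zero R] (B : Matrix ι m R⟦Γ⟧) (a : m → Γ) : Matrix ι m R :=
  of fun i j => (B i j).coeff (a j)

section Determinant

variable [AddCommMonoid Γ] [IsOrderedCancelAddMonoid Γ] [CommRing R] [DecidableEq ι]

theorem sum_colOrderTop_le_orderTop_det (B : Matrix ι ι R⟦Γ⟧) :
    ∑ j, B.colOrderTop j ≤ B.det.orderTop := by
  rw [det_apply]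
  refine le_orderTop_sum fun σ _ => le_trans ?_ (orderTop_le_orderTop_smul _ _)
  exact (Finset.sum_le_sum fun i _ => colOrderTop_le B (σ i) i).trans
    (sum_orderTop_le_orderTop_prod _ _)

theorem coeff_det_eq_det_colCoeff (B : Matrix ι ι R⟦Γ⟧) (a : ι → Γ)
    (h : ∀ j, (a j : WithTop Γ) ≤ B.colOrderTop j) :
    B.det.coeff (∑ j, a j) = (B.colCoeff a).det := by
  rw [det_apply, det_apply, coeff_sum]
  refine Finset.sum_congr rfl fun σ _ => ?_
  rw [coeff_smul, coeff_prod_of_le_orderTop _ _ _ fun i _ => (h i).trans (colOrderTop_le _ _ _)]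
  rfl

theorem orderTop_det_eq_sum_of_det_colCoeff_ne_zero (B : Matrix ι ι R⟦Γ⟧) (a : ι → Γ)
    (ha : ∀ j, B.colOrderTop j = a j) (hN : (B.colCoeff a).det ≠ 0) :
    B.det.orderTop = ((∑ j, a j : Γ) : WithTop Γ) := by
  refine le_antisymm (orderTop_le_of_coeff_ne_zero ?_) ?_
  · rwa [coeff_det_eq_det_colCoeff B a fun j => (ha j).ge]
  · simpa only [WithTop.coe_sum, ha] using sum_colOrderTop_le_orderTop_det B

end Determinant

theorem lt_orderTop_mulVec_of_colCoeff_mulVec_eq_zero [AddCommGroup Γ] [IsOrderedAddMonoid Γ]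
    [CommRing R] [Fintype m] (B : Matrix ι m R⟦Γ⟧) (a : m → Γ)
    (h : ∀ j, (a j : WithTop Γ) ≤ B.colOrderTop j) {γ : m → R} (hγ : B.colCoeff a *ᵥ γ = 0)
    (g : Γ) (i : ι) :
    (g : WithTop Γ) < ((B *ᵥ fun l => HahnSeries.single (g - a l) (γ l)) i).orderTop := by
  have hterm : ∀ l, (g : WithTop Γ) ≤ (B i l * HahnSeries.single (g - a l) (γ l)).orderTop :=
    fun l => calc (g : WithTop Γ) = ↑(a l) + ↑(g - a l) := by rw [← WithTop.coe_add, add_sub_cancel]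
      _ ≤ (B i l).orderTop + (HahnSeries.single (g - a l) (γ l)).orderTop :=
        add_le_add ((h l).trans (colOrderTop_le B i l)) orderTop_single_le
      _ ≤ _ := orderTop_add_le_mul
  have hcoeff : ((B *ᵥ fun l => HahnSeries.single (g - a l) (γ l)) i).coeff g = 0 := by
    have hl : ∀ l, (B i l * HahnSeries.single (g - a l) (γ l)).coeff g = B.colCoeff a i l * γ l :=
      fun l => by
        simpa [colCoeff] using coeff_mul_single_add (x := B i l) (r := γ l) (a := a l) (b := g - a l)
    simp only [mulVec, dotProduct, coeff_sum, hl]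
    exact congrFun hγ i
  exact lt_of_le_of_ne (le_orderTop_sum fun l _ => hterm l) (orderTop_ne_of_coeff_eq_zero hcoeff).symm

end Matrix

section LaurentSeries

variable {Fq : Type} [Field Fq]

theorem polyK_monomial (e : ℕ) (c : Fq) :
    polyK Fq (Polynomial.monomial e c) = HahnSeries.single (-(e : ℤ)) c := by
  simp [polyK, Polynomial.aeval_monomial, HahnSeries.single_pow, LaurentSeries.algebraMap_apply,
    HahnSeries.C_apply, HahnSeries.single_mul_single]

theorem kabs_le_one_of_orderTop_nonneg {x : LaurentSeries Fq} (hx : 0 ≤ x.orderTop) :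
    kabs x ≤ 1 := by
  unfold kabs
  split_ifs
  · exact zero_le_one
  · rw [Real.exp_le_one_iff, neg_nonpos]
    exact_mod_cast HahnSeries.zero_le_orderTop_iff.mp hx

theorem orderTop_eq_zero_of_kabs_eq_one {x : LaurentSeries Fq} (hx : kabs x = 1) :
    x.orderTop = 0 := by
  unfold kabs at hx
  split_ifs at hx with h
  · exact absurd hx zero_ne_one
  · rw [Real.exp_eq_one_iff, neg_eq_zero, Int.cast_eq_zero] at hx
    rw [← HahnSeries.order_eq_orderTop_of_ne_zero h, hx, WithTop.coe_zero]

theorem supNorm_le_one_of_orderTop_nonneg {m : ℕ} {v : Fin m → LaurentSeries Fq}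
    (hv : ∀ i, 0 ≤ (v i).orderTop) : supNorm v ≤ 1 :=
  Real.iSup_le (fun i => kabs_le_one_of_orderTop_nonneg (hv i)) zero_le_one

open Matrix Polynomial

variable {ι : Type*} [Fintype ι] [DecidableEq ι]

theorem orderTop_det_mul_map_polyK (A : Matrix ι ι (LaurentSeries Fq))
    {U : Matrix ι ι Fq[X]} (hU : IsUnit U.det) :
    (A * U.map (polyK Fq)).det.orderTop = A.det.orderTop := by
  obtain ⟨c, hc, hcU⟩ := Polynomial.isUnit_iff.mp hU
  rw [det_mul, ← RingHom.mapMatrix_apply, ← RingHom.map_det, ← hcU, ← monomial_zero_left,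
    polyK_monomial, HahnSeries.orderTop_mul, HahnSeries.orderTop_single hc.ne_zero]
  simp

theorem exists_isUnit_det_lt_sum_colOrderTop (B : Matrix ι ι (LaurentSeries Fq)) (a : ι → ℤ)
    (ha : ∀ j, B.colOrderTop j = a j) (hN : (B.colCoeff a).det = 0) :
    ∃ E : Matrix ι ι Fq[X], IsUnit E.det ∧
      ((∑ j, a j : ℤ) : WithTop ℤ) < ∑ j, (B * E.map (polyK Fq)).colOrderTop j := by
  obtain ⟨γ, hγ, hNγ⟩ := exists_mulVec_eq_zero_iff.mpr hN
  -- `j0` has the least order among the columns that `γ` involves, so the shifts below are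
  -- polynomial.
  obtain ⟨j0, hj0, hmin⟩ := Finset.exists_min_image (Finset.univ.filter (γ · ≠ 0)) a
    (by simpa [Finset.filter_nonempty_iff, Function.ne_iff] using hγ)
  set c : ι → Fq[X] := fun l => monomial (a l - a j0).toNat (γ l)
  have hc : (fun l => polyK Fq (c l)) = fun l => HahnSeries.single (a j0 - a l) (γ l) := by
    ext1 l
    by_cases hl : γ l = 0
    · simp [c, hl]
    · rw [polyK_monomial, Int.toNat_of_nonneg (sub_nonneg.mpr (hmin l (by simpa using hl))),
        neg_sub]
  refine ⟨(1 : Matrix ι ι Fq[X]).updateCol j0 c, ?_, ?_⟩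
  · have hcol : (fun k => ∑ i, c i • (1 : Matrix ι ι Fq[X]) k i) = c :=
      funext fun k => by simp [one_apply]
    rw [← hcol, det_updateCol_sum, det_one, smul_eq_mul, mul_one]
    have hγj0 : γ j0 ≠ 0 := by simpa using hj0
    simpa [c] using isUnit_C.mpr (isUnit_iff_ne_zero.mpr hγj0)
  have hB : B * ((1 : Matrix ι ι Fq[X]).updateCol j0 c).map (polyK Fq) =
      B.updateCol j0 (B *ᵥ fun l => HahnSeries.single (a j0 - a l) (γ l)) := by
    rw [map_updateCol, Matrix.map_one _ (map_zero _) (map_one _), mul_updateCol, Matrix.mul_one,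
      ← hc]
    rfl
  set v := B *ᵥ fun l => HahnSeries.single (a j0 - a l) (γ l)
  have hcol : ∀ j ∈ Finset.univ.erase j0, (B.updateCol j0 v).colOrderTop j = a j := fun j hj => by
    rw [← ha j]
    simp [colOrderTop, updateCol_ne (Finset.ne_of_mem_erase hj)]
  have hcol0 : (a j0 : WithTop ℤ) < (B.updateCol j0 v).colOrderTop j0 := by
    simp only [colOrderTop, updateCol_self]
    exact (Finset.lt_inf_iff (WithTop.coe_lt_top _)).mpr fun i _ =>
      lt_orderTop_mulVec_of_colCoeff_mulVec_eq_zero B a (fun j => (ha j).ge) hNγ (a j0) i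
  rw [hB, ← Finset.add_sum_erase _ _ (Finset.mem_univ j0),
    ← Finset.add_sum_erase _ _ (Finset.mem_univ j0), Finset.sum_congr rfl hcol,
    WithTop.coe_add, WithTop.coe_sum]
  exact WithTop.add_lt_add_right (WithTop.sum_ne_top.mpr fun _ _ => WithTop.coe_ne_top) hcol0

theorem exists_isUnit_det_sum_colOrderTop_eq (A : Matrix ι ι (LaurentSeries Fq))
    (hA : A.det ≠ 0) :
    ∃ U : Matrix ι ι Fq[X], IsUnit U.det ∧ ∃ a : ι → ℤ,
      (∀ j, (A * U.map (polyK Fq)).colOrderTop j = a j) ∧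
      ((∑ j, a j : ℤ) : WithTop ℤ) = A.det.orderTop := by
  set S : Matrix ι ι Fq[X] → WithTop ℤ := fun U => ∑ j, (A * U.map (polyK Fq)).colOrderTop j
  obtain ⟨d, hd⟩ := WithTop.ne_top_iff_exists.mp (HahnSeries.orderTop_ne_top.mpr hA)
  have hbound : ∀ U : Matrix ι ι Fq[X], IsUnit U.det → S U ≤ d := fun U hU =>
    (sum_colOrderTop_le_orderTop_det _).trans (by rw [orderTop_det_mul_map_polyK A hU, hd])
  have hfin : ∀ U : Matrix ι ι Fq[X], IsUnit U.det → ∃ z : ℤ, S U = z := fun U hU =>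
    (WithTop.ne_top_iff_exists.mp (ne_top_of_le_ne_top WithTop.coe_ne_top (hbound U hU))).imp
      fun _ h => h.symm
  obtain ⟨s, ⟨U, hU, hUs⟩, hmax⟩ := Int.exists_greatest_of_bdd
    (P := fun z => ∃ U : Matrix ι ι Fq[X], IsUnit U.det ∧ S U = z)
    ⟨d, fun z ⟨U, hU, hUz⟩ => WithTop.coe_le_coe.mp (hUz ▸ hbound U hU)⟩
    ((hfin 1 (by simp)).imp fun _ h => ⟨1, by simp, h⟩)
  set B := A * U.map (polyK Fq)
  have hSU : S U ≠ ⊤ := hUs ▸ WithTop.coe_ne_top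
  choose a ha using fun j =>
    WithTop.ne_top_iff_exists.mp (WithTop.sum_ne_top.mp hSU j (Finset.mem_univ j))
  have hs : s = ∑ j, a j :=
    WithTop.coe_injective (by rw [← hUs, WithTop.coe_sum]; simp only [ha]; rfl)
  have hN : (B.colCoeff a).det ≠ 0 := by
    intro hN
    obtain ⟨E, hE, hlt⟩ := exists_isUnit_det_lt_sum_colOrderTop B a (fun j => (ha j).symm) hN
    have hUE : IsUnit (U * E).det := by rw [det_mul]; exact hU.mul hE
    obtain ⟨z, hz⟩ := hfin (U * E) hUE
    have hSUE : S (U * E) = ∑ j, (B * E.map (polyK Fq)).colOrderTop j := by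
      simp only [S, B, Matrix.map_mul, Matrix.mul_assoc]
    rw [hz] at hSUE
    exact (hs ▸ hmax z ⟨U * E, hUE, hz⟩).not_gt (WithTop.coe_lt_coe.mp (hSUE ▸ hlt))
  refine ⟨U, hU, a, fun j => (ha j).symm, ?_⟩
  rw [← orderTop_det_mul_map_polyK A hU]
  exact (orderTop_det_eq_sum_of_det_colCoeff_ne_zero B a (fun j => (ha j).symm) hN).symm

end LaurentSeries

theorem minkowski_first_general (Fq : Type) [Field Fq] (n : ℕ)
    (A : Matrix (Fin (n+1)) (Fin (n+1)) (LaurentSeries Fq))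
    (hA : kabs A.det = 1) :
    ∃ p : Fin (n+1) → Polynomial Fq, p ≠ 0 ∧
      supNorm (A.mulVec fun i => polyK Fq (p i)) ≤ 1 := by
  have hdet : A.det.orderTop = 0 := orderTop_eq_zero_of_kabs_eq_one hA
  obtain ⟨U, hU, a, ha, hsum⟩ := exists_isUnit_det_sum_colOrderTop_eq A
    (HahnSeries.orderTop_ne_top.mp (by rw [hdet]; exact WithTop.zero_ne_top))
  have hsum0 : ∑ j, a j = 0 := WithTop.coe_eq_zero.mp (hsum.trans hdet)
  obtain ⟨j, -, hj⟩ := Finset.exists_le_of_sum_le (f := fun _ => 0) (g := a)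
    Finset.univ_nonempty (by rw [hsum0, Finset.sum_const_zero])
  refine ⟨fun i => U i j, fun hp => ?_, supNorm_le_one_of_orderTop_nonneg fun i => ?_⟩
  · exact not_isUnit_zero (Matrix.det_eq_zero_of_column_eq_zero j (fun i => congrFun hp i) ▸ hU)
  · calc (0 : WithTop ℤ) ≤ a j := WithTop.coe_nonneg.mpr hj
      _ = (A * U.map (polyK Fq)).colOrderTop j := (ha j).symm
      _ ≤ _ := Matrix.colOrderTop_le _ i j

/-- Minkowski's first theorem over function fields. -/
theorem minkowski_first (Fq : Type) [Field Fq] [Fintype Fq] (n : ℕ)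
    (A : Matrix (Fin (n+1)) (Fin (n+1)) (LaurentSeries Fq))
    (hA : kabs A.det = 1) :
    ∃ p : Fin (n+1) → Polynomial Fq, p ≠ 0 ∧
      supNorm (A.mulVec fun i => polyK Fq (p i)) ≤ 1 :=
  minkowski_first_general Fq n A hA
end
end
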